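/- Embed SU(2) into SU(5) as the block-diagonal matrices diag(A, 1, 1, 1) with A ∈ SU(2), acting on the span of the first two basis vectors. The set of elements of Λ(ℂ⁵) fixed by Λ(U) for every U in this copy of SU(2) is exactly the ℂ-linear span of the sixteen monomials x ∧ y, where x ∈ {1, e₁∧e₂} and y ranges over the eight exterior monomials in e₃, e₄, e₅ (namely 1, e₃, e₄, e₅, e₃∧e₄, e₃∧e₅, e₄∧e₅, e₃∧e₄∧e₅); in particular, the space of SU(2)-invariant spinors in Λ(ℂ⁵) has complex dimension 16. -/
import Mathlib


set_option maxHeartbeats 1000000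

noncomputable section

/-- The generator `eᵢ` of the exterior algebra `Λ(ℂ⁵)` (0-based: `ee 0 = e₁`, …, `ee 4 = e₅`). -/
def ee (i : Fin 5) : ExteriorAlgebra ℂ (Fin 5 → ℂ) :=
  ExteriorAlgebra.ι ℂ (Pi.single i (1 : ℂ))

/-- The algebra automorphism `Λ(U)` of `Λ(ℂ⁵)` induced by a matrix `U`
acting on `ℂ⁵`. -/
def extAut (U : Matrix (Fin 5) (Fin 5) ℂ) :
    ExteriorAlgebra ℂ (Fin 5 → ℂ) →ₐ[ℂ] ExteriorAlgebra ℂ (Fin 5 → ℂ) :=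
  ExteriorAlgebra.map (Matrix.mulVecLin U)

/-- The block-diagonal embedding `A ↦ diag(A, 1, 1, 1)` of a `2×2` matrix into `5×5`
matrices. -/
def embed2in5 (A : Matrix (Fin 2) (Fin 2) ℂ) : Matrix (Fin 5) (Fin 5) ℂ := fun i j =>
  if hi : (i : ℕ) < 2 then
    if hj : (j : ℕ) < 2 then A ⟨(i : ℕ), hi⟩ ⟨(j : ℕ), hj⟩ else 0
  else if i = j then 1 else 0

/-- with `SU(2) ⊂ SU(5)` embedded as `diag(A, 1, 1, 1)`, the
`SU(2)`-invariant elements of `Λ(ℂ⁵)` are exactly the span of the sixteen monomials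
`x ∧ y` with `x ∈ {1, e₁∧e₂}` and `y` an exterior monomial in `e₃, e₄, e₅`. -/

abbrev E5 := ExteriorAlgebra ℂ (Fin 5 → ℂ)

lemma ee_sq (i : Fin 5) : ee i * ee i = 0 := ExteriorAlgebra.ι_sq_zero _
lemma ee_swap (i j : Fin 5) : ee i * ee j = -(ee j * ee i) :=
  eq_neg_of_add_eq_zero_left (ExteriorAlgebra.ι_add_mul_swap _ _)
lemma ee_swap' (i j : Fin 5) (x : E5) :
    ee i * (ee j * x) = -(ee j * (ee i * x)) := by
  rw [← mul_assoc, ee_swap, neg_mul, mul_assoc]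
lemma ee_sq' (i : Fin 5) (x : E5) : ee i * (ee i * x) = 0 := by
  rw [← mul_assoc, ee_sq, zero_mul]

/-- the 8 monomials in e₃,e₄,e₅ -/
def Yset : Set E5 :=
  {1, ee 2, ee 3, ee 4, ee 2 * ee 3, ee 2 * ee 4, ee 3 * ee 4, ee 2 * ee 3 * ee 4}
/-- the 16 even monomials -/
def Mset : Set E5 :=
  {z | ∃ x ∈ ({1, ee 0 * ee 1} : Set E5), ∃ y ∈ Yset, z = x * y}
/-- the 16 odd monomials -/
def Nset : Set E5 :=
  {z | ∃ x ∈ ({ee 0, ee 1} : Set E5), ∃ y ∈ Yset, z = x * y}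

lemma Ymul {i : Fin 5} (hi : 2 ≤ (i : ℕ)) {y : E5} (hy : y ∈ Yset) :
    ee i * y ∈ Submodule.span ℂ Yset := by
  have g1 : (1 : E5) ∈ Yset := Or.inl rfl
  have g2 : ee 2 ∈ Yset := by right; left; rfl
  have g3 : ee 3 ∈ Yset := by right; right; left; rfl
  have g4 : ee 4 ∈ Yset := by right; right; right; left; rfl
  have g23 : ee 2 * ee 3 ∈ Yset := by right; right; right; right; left; rfl
  have g24 : ee 2 * ee 4 ∈ Yset := by right; right; right; right; right; left; rfl
  have g34 : ee 3 * ee 4 ∈ Yset := by right; right; right; right; right; right; left; rfl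
  have g234 : ee 2 * ee 3 * ee 4 ∈ Yset := by
    right; right; right; right; right; right; right; exact rfl
  have sp : ∀ w ∈ Yset, w ∈ Submodule.span ℂ Yset := fun w hw => Submodule.subset_span hw
  fin_cases i
  · exact absurd hi (by decide)
  · exact absurd hi (by decide)
  all_goals rcases hy with rfl | rfl | rfl | rfl | rfl | rfl | rfl | rfl
  -- i = 2
  · show ee 2 * 1 ∈ _; rw [mul_one]; exact sp _ g2
  · show ee 2 * ee 2 ∈ _; rw [ee_sq]; exact Submodule.zero_mem _
  · show ee 2 * ee 3 ∈ _; exact sp _ g23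
  · show ee 2 * ee 4 ∈ _; exact sp _ g24
  · show ee 2 * (ee 2 * ee 3) ∈ _; rw [ee_sq' 2]; exact Submodule.zero_mem _
  · show ee 2 * (ee 2 * ee 4) ∈ _; rw [ee_sq' 2]; exact Submodule.zero_mem _
  · show ee 2 * (ee 3 * ee 4) ∈ _; rw [← mul_assoc]; exact sp _ g234
  · show ee 2 * (ee 2 * ee 3 * ee 4) ∈ _
    rw [mul_assoc (ee 2) (ee 3) (ee 4), ee_sq' 2]; exact Submodule.zero_mem _
  -- i = 3
  · show ee 3 * 1 ∈ _; rw [mul_one]; exact sp _ g3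
  · show ee 3 * ee 2 ∈ _; rw [ee_swap 3 2]; exact Submodule.neg_mem _ (sp _ g23)
  · show ee 3 * ee 3 ∈ _; rw [ee_sq]; exact Submodule.zero_mem _
  · show ee 3 * ee 4 ∈ _; exact sp _ g34
  · show ee 3 * (ee 2 * ee 3) ∈ _
    rw [ee_swap' 3 2, ee_sq 3, mul_zero, neg_zero]; exact Submodule.zero_mem _
  · show ee 3 * (ee 2 * ee 4) ∈ _
    rw [ee_swap' 3 2, ← mul_assoc]; exact Submodule.neg_mem _ (sp _ g234)
  · show ee 3 * (ee 3 * ee 4) ∈ _; rw [ee_sq' 3]; exact Submodule.zero_mem _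
  · show ee 3 * (ee 2 * ee 3 * ee 4) ∈ _
    rw [mul_assoc (ee 2) (ee 3) (ee 4), ee_swap' 3 2, ee_sq' 3, mul_zero, neg_zero]
    exact Submodule.zero_mem _
  -- i = 4
  · show ee 4 * 1 ∈ _; rw [mul_one]; exact sp _ g4
  · show ee 4 * ee 2 ∈ _; rw [ee_swap 4 2]; exact Submodule.neg_mem _ (sp _ g24)
  · show ee 4 * ee 3 ∈ _; rw [ee_swap 4 3]; exact Submodule.neg_mem _ (sp _ g34)
  · show ee 4 * ee 4 ∈ _; rw [ee_sq]; exact Submodule.zero_mem _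
  · show ee 4 * (ee 2 * ee 3) ∈ _
    rw [ee_swap' 4 2, ee_swap 4 3, mul_neg, neg_neg, ← mul_assoc]; exact sp _ g234
  · show ee 4 * (ee 2 * ee 4) ∈ _
    rw [ee_swap' 4 2, ee_sq 4, mul_zero, neg_zero]; exact Submodule.zero_mem _
  · show ee 4 * (ee 3 * ee 4) ∈ _
    rw [ee_swap' 4 3, ee_sq 4, mul_zero, neg_zero]; exact Submodule.zero_mem _
  · show ee 4 * (ee 2 * ee 3 * ee 4) ∈ _
    rw [mul_assoc (ee 2) (ee 3) (ee 4), ee_swap' 4 2, ee_swap' 4 3, ee_sq 4,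
      mul_zero, neg_zero, mul_zero, neg_zero]
    exact Submodule.zero_mem _

def spanY : Submodule ℂ E5 := Submodule.span ℂ Yset
def spanM : Submodule ℂ E5 := Submodule.span ℂ Mset
def spanN : Submodule ℂ E5 := Submodule.span ℂ Nset

lemma Ymul' {i : Fin 5} (hi : 2 ≤ (i : ℕ)) {w : E5} (hw : w ∈ spanY) :
    ee i * w ∈ spanY := by
  induction hw using Submodule.span_induction with
  | mem y hy => exact Ymul hi hy
  | zero => rw [mul_zero]; exact Submodule.zero_mem _
  | add a b _ _ ha hb => rw [mul_add]; exact Submodule.add_mem _ ha hb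
  | smul c a _ ha => rw [mul_smul_comm]; exact Submodule.smul_mem _ _ ha

lemma H0 {w : E5} (hw : w ∈ spanY) : w ∈ spanM := by
  induction hw using Submodule.span_induction with
  | mem y hy => exact Submodule.subset_span ⟨1, Or.inl rfl, y, hy, (one_mul y).symm⟩
  | zero => exact Submodule.zero_mem _
  | add a b _ _ ha hb => exact Submodule.add_mem _ ha hb
  | smul c a _ ha => exact Submodule.smul_mem _ _ ha

lemma H01 {w : E5} (hw : w ∈ spanY) : ee 0 * (ee 1 * w) ∈ spanM := by
  induction hw using Submodule.span_induction with
  | mem y hy =>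
    rw [← mul_assoc]
    exact Submodule.subset_span ⟨ee 0 * ee 1, Or.inr rfl, y, hy, rfl⟩
  | zero => rw [mul_zero, mul_zero]; exact Submodule.zero_mem _
  | add a b _ _ ha hb => rw [mul_add, mul_add]; exact Submodule.add_mem _ ha hb
  | smul c a _ ha => rw [mul_smul_comm, mul_smul_comm]; exact Submodule.smul_mem _ _ ha

lemma HeN {x : E5} (hx : x ∈ ({ee 0, ee 1} : Set E5)) {w : E5} (hw : w ∈ spanY) :
    x * w ∈ spanN := by
  induction hw using Submodule.span_induction with
  | mem y hy => exact Submodule.subset_span ⟨x, hx, y, hy, rfl⟩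
  | zero => rw [mul_zero]; exact Submodule.zero_mem _
  | add a b _ _ ha hb => rw [mul_add]; exact Submodule.add_mem _ ha hb
  | smul c a _ ha => rw [mul_smul_comm]; exact Submodule.smul_mem _ _ ha

lemma fin5_lt2 {i : Fin 5} (h : (i : ℕ) < 2) : i = 0 ∨ i = 1 := by
  fin_cases i <;> revert h <;> decide

lemma L1 {i : Fin 5} (hi : 2 ≤ (i : ℕ)) {m : E5} (hm : m ∈ spanM) :
    ee i * m ∈ spanM := by
  induction hm using Submodule.span_induction with
  | mem z hz =>
    obtain ⟨x, hx, y, hy, rfl⟩ := hz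
    rcases hx with rfl | rfl
    · rw [one_mul]; exact H0 (Ymul hi hy)
    · rw [mul_assoc (ee 0) (ee 1) y, ee_swap' i 0, ee_swap' i 1, mul_neg, neg_neg]
      exact H01 (Ymul hi hy)
  | zero => rw [mul_zero]; exact Submodule.zero_mem _
  | add a b _ _ ha hb => rw [mul_add]; exact Submodule.add_mem _ ha hb
  | smul c a _ ha => rw [mul_smul_comm]; exact Submodule.smul_mem _ _ ha

lemma L2 {i : Fin 5} (hi : (i : ℕ) < 2) {m : E5} (hm : m ∈ spanM) :
    ee i * m ∈ spanN := by
  induction hm using Submodule.span_induction with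
  | mem z hz =>
    obtain ⟨x, hx, y, hy, rfl⟩ := hz
    rcases hx with rfl | rfl
    · rw [one_mul]
      rcases fin5_lt2 hi with rfl | rfl
      · exact HeN (Or.inl rfl) (Submodule.subset_span hy)
      · exact HeN (Or.inr rfl) (Submodule.subset_span hy)
    · rcases fin5_lt2 hi with rfl | rfl
      · rw [mul_assoc (ee 0) (ee 1) y, ee_sq' 0]; exact Submodule.zero_mem _
      · rw [mul_assoc (ee 0) (ee 1) y, ee_swap' 1 0, ee_sq' 1, mul_zero, neg_zero]
        exact Submodule.zero_mem _
  | zero => rw [mul_zero]; exact Submodule.zero_mem _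
  | add a b _ _ ha hb => rw [mul_add]; exact Submodule.add_mem _ ha hb
  | smul c a _ ha => rw [mul_smul_comm]; exact Submodule.smul_mem _ _ ha

lemma L3 {i : Fin 5} (hi : 2 ≤ (i : ℕ)) {m : E5} (hm : m ∈ spanN) :
    ee i * m ∈ spanN := by
  induction hm using Submodule.span_induction with
  | mem z hz =>
    obtain ⟨x, hx, y, hy, rfl⟩ := hz
    rcases hx with rfl | rfl
    · rw [ee_swap' i 0]
      exact Submodule.neg_mem _ (HeN (Or.inl rfl) (Ymul hi hy))
    · rw [ee_swap' i 1]
      exact Submodule.neg_mem _ (HeN (Or.inr rfl) (Ymul hi hy))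
  | zero => rw [mul_zero]; exact Submodule.zero_mem _
  | add a b _ _ ha hb => rw [mul_add]; exact Submodule.add_mem _ ha hb
  | smul c a _ ha => rw [mul_smul_comm]; exact Submodule.smul_mem _ _ ha

lemma L4 {i : Fin 5} (hi : (i : ℕ) < 2) {m : E5} (hm : m ∈ spanN) :
    ee i * m ∈ spanM := by
  induction hm using Submodule.span_induction with
  | mem z hz =>
    obtain ⟨x, hx, y, hy, rfl⟩ := hz
    rcases fin5_lt2 hi with rfl | rfl <;> rcases hx with rfl | rfl
    · rw [ee_sq' 0]; exact Submodule.zero_mem _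
    · exact H01 (Submodule.subset_span hy)
    · rw [ee_swap' 1 0]
      exact Submodule.neg_mem _ (H01 (Submodule.subset_span hy))
    · rw [ee_sq' 1]; exact Submodule.zero_mem _
  | zero => rw [mul_zero]; exact Submodule.zero_mem _
  | add a b _ _ ha hb => rw [mul_add]; exact Submodule.add_mem _ ha hb
  | smul c a _ ha => rw [mul_smul_comm]; exact Submodule.smul_mem _ _ ha

-- extAut computations
lemma extAut_ee (A : Matrix (Fin 2) (Fin 2) ℂ) (j : Fin 5) :
    extAut (embed2in5 A) (ee j) =
      ExteriorAlgebra.ι ℂ (fun k => embed2in5 A k j) := by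
  unfold extAut ee
  rw [ExteriorAlgebra.map_apply_ι]
  congr 1
  funext k
  simp [Matrix.mulVecLin, Matrix.mulVec, dotProduct, Pi.single_apply,
    Fin.sum_univ_five]

lemma extAut_ee_ge2 (A : Matrix (Fin 2) (Fin 2) ℂ) (j : Fin 5) (hj : 2 ≤ (j:ℕ)) :
    extAut (embed2in5 A) (ee j) = ee j := by
  rw [extAut_ee]
  unfold ee
  congr 1
  funext k
  fin_cases j <;> simp at hj ⊢ <;> fin_cases k <;>
    simp [embed2in5, Pi.single_apply] <;> exact fun h => absurd h (by decide)

lemma extAut_ee0 (A : Matrix (Fin 2) (Fin 2) ℂ) :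
    extAut (embed2in5 A) (ee 0) = A 0 0 • ee 0 + A 1 0 • ee 1 := by
  rw [extAut_ee]
  unfold ee
  rw [← map_smul, ← map_smul, ← map_add]
  congr 1
  funext k
  fin_cases k <;> simp [embed2in5, Pi.single_apply]

lemma extAut_ee1 (A : Matrix (Fin 2) (Fin 2) ℂ) :
    extAut (embed2in5 A) (ee 1) = A 0 1 • ee 0 + A 1 1 • ee 1 := by
  rw [extAut_ee]
  unfold ee
  rw [← map_smul, ← map_smul, ← map_add]
  congr 1
  funext k
  fin_cases k <;> simp [embed2in5, Pi.single_apply]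

lemma extAut_e01 (A : Matrix (Fin 2) (Fin 2) ℂ)
    (hA : A ∈ Matrix.specialUnitaryGroup (Fin 2) ℂ) :
    extAut (embed2in5 A) (ee 0 * ee 1) = ee 0 * ee 1 := by
  have hd : A 0 0 * A 1 1 - A 0 1 * A 1 0 = 1 := by
    have := (Matrix.mem_specialUnitaryGroup_iff.mp hA).2
    rwa [Matrix.det_fin_two] at this
  rw [map_mul, extAut_ee0, extAut_ee1]
  rw [mul_add, add_mul, add_mul, smul_mul_smul_comm, smul_mul_smul_comm,
    smul_mul_smul_comm, smul_mul_smul_comm, ee_sq, ee_sq, smul_zero, smul_zero,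
    ee_swap 1 0]
  match_scalars
  linear_combination hd

lemma tau_ee0 : extAut (embed2in5 (-1)) (ee 0) = -ee 0 := by
  rw [extAut_ee0]
  simp [Matrix.neg_apply, Matrix.one_apply]

lemma tau_ee1 : extAut (embed2in5 (-1)) (ee 1) = -ee 1 := by
  rw [extAut_ee1]
  simp [Matrix.neg_apply, Matrix.one_apply]

lemma word_mem (l : List (Fin 5)) :
    (((l.map ee).prod ∈ spanM ∧
        extAut (embed2in5 (-1)) ((l.map ee).prod) = (l.map ee).prod) ∨
     ((l.map ee).prod ∈ spanN ∧
        extAut (embed2in5 (-1)) ((l.map ee).prod) = -(l.map ee).prod)) := by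
  induction l with
  | nil =>
    left
    constructor
    · simp only [List.map_nil, List.prod_nil]
      exact Submodule.subset_span ⟨1, Or.inl rfl, 1, Or.inl rfl, (one_mul 1).symm⟩
    · simp
  | cons i l ih =>
    simp only [List.map_cons, List.prod_cons] at *
    by_cases hi : 2 ≤ (i : ℕ)
    · rcases ih with ⟨h1, h2⟩ | ⟨h1, h2⟩
      · exact Or.inl ⟨L1 hi h1, by rw [map_mul, extAut_ee_ge2 _ _ hi, h2]⟩
      · exact Or.inr ⟨L3 hi h1,
          by rw [map_mul, extAut_ee_ge2 _ _ hi, h2, mul_neg]⟩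
    · push_neg at hi
      have htau : extAut (embed2in5 (-1)) (ee i) = -ee i := by
        rcases fin5_lt2 hi with rfl | rfl
        · exact tau_ee0
        · exact tau_ee1
      rcases ih with ⟨h1, h2⟩ | ⟨h1, h2⟩
      · exact Or.inr ⟨L2 hi h1, by rw [map_mul, htau, h2, neg_mul]⟩
      · exact Or.inl ⟨L4 hi h1,
          by rw [map_mul, htau, h2, neg_mul_neg]⟩

def Wset : Set E5 := {x | ∃ l : List (Fin 5), x = (l.map ee).prod}

lemma words_span (x : E5) : x ∈ Submodule.span ℂ Wset := by
  induction x using ExteriorAlgebra.induction with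
  | algebraMap r =>
    rw [Algebra.algebraMap_eq_smul_one]
    exact Submodule.smul_mem _ _ (Submodule.subset_span ⟨[], by simp⟩)
  | ι v =>
    have hv : v = ∑ i : Fin 5, v i • (Pi.single i (1 : ℂ) : Fin 5 → ℂ) := by
      conv_lhs => rw [pi_eq_sum_univ v]
      congr 1
      funext i
      congr 1
      funext j
      rw [Pi.single_apply]
      simp [eq_comm]
    rw [hv, map_sum]
    refine Submodule.sum_mem _ fun i _ => ?_
    rw [map_smul]
    exact Submodule.smul_mem _ _ (Submodule.subset_span ⟨[i], by simp [ee]⟩)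
  | mul a b ha hb =>
    have h := Submodule.mul_mem_mul ha hb
    rw [Submodule.span_mul_span] at h
    refine Submodule.span_le.mpr ?_ h
    rintro z ⟨p, ⟨lp, rfl⟩, q, ⟨lq, rfl⟩, rfl⟩
    exact Submodule.subset_span ⟨lp ++ lq, by simp⟩
  | add a b ha hb => exact Submodule.add_mem _ ha hb

lemma avg_mem (y : E5) :
    (2⁻¹ : ℂ) • (y + extAut (embed2in5 (-1)) y) ∈ spanM := by
  have hy := words_span y
  induction hy using Submodule.span_induction with
  | mem w hw =>
    obtain ⟨l, rfl⟩ := hw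
    rcases word_mem l with ⟨h1, h2⟩ | ⟨h1, h2⟩
    · rw [h2, ← two_smul ℂ, smul_smul]
      norm_num
      exact h1
    · rw [h2, add_neg_cancel, smul_zero]
      exact Submodule.zero_mem _
  | zero =>
    rw [map_zero, add_zero, smul_zero]
    exact Submodule.zero_mem _
  | add a b _ _ ha hb =>
    rw [map_add, show a + b + (extAut (embed2in5 (-1)) a + extAut (embed2in5 (-1)) b)
      = (a + extAut (embed2in5 (-1)) a) + (b + extAut (embed2in5 (-1)) b) by abel,
      smul_add]
    exact Submodule.add_mem _ ha hb
  | smul c a _ ha =>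
    rw [map_smul, ← smul_add, smul_comm]
    exact Submodule.smul_mem _ _ ha

lemma neg_one_mem_SU2 : (-1 : Matrix (Fin 2) (Fin 2) ℂ) ∈ Matrix.specialUnitaryGroup (Fin 2) ℂ := by
  rw [Matrix.mem_specialUnitaryGroup_iff]
  constructor
  · rw [Matrix.mem_unitaryGroup_iff]
    simp
  · simp [Matrix.det_neg]

theorem su2_invariant_spinors :
    {x : ExteriorAlgebra ℂ (Fin 5 → ℂ) |
        ∀ A ∈ Matrix.specialUnitaryGroup (Fin 2) ℂ, extAut (embed2in5 A) x = x} =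
      ↑(Submodule.span ℂ
        {z : ExteriorAlgebra ℂ (Fin 5 → ℂ) |
          ∃ x ∈ ({1, ee 0 * ee 1} : Set (ExteriorAlgebra ℂ (Fin 5 → ℂ))),
            ∃ y ∈ ({1, ee 2, ee 3, ee 4, ee 2 * ee 3, ee 2 * ee 4, ee 3 * ee 4,
                ee 2 * ee 3 * ee 4} : Set (ExteriorAlgebra ℂ (Fin 5 → ℂ))),
              z = x * y}) := by
  have hsets : (Submodule.span ℂ
        {z : ExteriorAlgebra ℂ (Fin 5 → ℂ) |
          ∃ x ∈ ({1, ee 0 * ee 1} : Set (ExteriorAlgebra ℂ (Fin 5 → ℂ))),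
            ∃ y ∈ ({1, ee 2, ee 3, ee 4, ee 2 * ee 3, ee 2 * ee 4, ee 3 * ee 4,
                ee 2 * ee 3 * ee 4} : Set (ExteriorAlgebra ℂ (Fin 5 → ℂ))),
              z = x * y}) = spanM := rfl
  rw [hsets]
  ext x
  simp only [Set.mem_setOf_eq, SetLike.mem_coe]
  constructor
  · intro hx
    have ht := hx (-1) neg_one_mem_SU2
    have h := avg_mem x
    rw [ht, ← two_smul ℂ, smul_smul] at h
    norm_num at h
    exact h
  · intro hx A hA
    have h2 := extAut_ee_ge2 A 2 (by decide)
    have h3 := extAut_ee_ge2 A 3 (by decide)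
    have h4 := extAut_ee_ge2 A 4 (by decide)
    induction hx using Submodule.span_induction with
    | mem z hz =>
      obtain ⟨x', hx', y', hy', rfl⟩ := hz
      rcases hx' with rfl | rfl <;>
        rcases hy' with rfl | rfl | rfl | rfl | rfl | rfl | rfl | rfl <;>
        simp only [map_mul, map_one, extAut_e01 A hA, h2, h3, h4]
    | zero => rw [map_zero]
    | add a b _ _ ha hb => rw [map_add, ha, hb]
    | smul c a _ ha => rw [map_smul, ha]
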